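/- arXiv:1712.05501 — 6 statements merged into one kernel-verified Lean document; each statement's English description precedes it below -/
import Mathlib

section
/- Let U, V be finite-dimensional vector spaces over a field and φ : U → V, ψ : V → U linear maps. If ψ ∘ φ : U → U is semi-simple (diagonalizable) and 0 is not an eigenvalue of φ ∘ ψ : V → V, then φ ∘ ψ is semi-simple. -/
theorem stmt_5 {F : Type*} [Field F] {U V : Type*}
    [AddCommGroup U] [Module F U] [FiniteDimensional F U]
    [AddCommGroup V] [Module F V] [FiniteDimensional F V]
    (φ : U →ₗ[F] V) (ψ : V →ₗ[F] U)
    (hdiag : ⨆ μ : F, Module.End.eigenspace (ψ ∘ₗ φ) μ = ⊤)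
    (h0 : ¬ Module.End.HasEigenvalue (φ ∘ₗ ψ) 0) :
    ⨆ μ : F, Module.End.eigenspace (φ ∘ₗ ψ) μ = ⊤ := by
  have hinj : Function.Injective (φ ∘ₗ ψ) := by
    rw [← LinearMap.ker_eq_bot]
    by_contra h
    exact h0 (Module.End.hasEigenvalue_iff.mpr (by
      simpa [Module.End.eigenspace_zero] using h))
  have hsurj : Function.Surjective (φ ∘ₗ ψ) :=
    (LinearMap.injective_iff_surjective).mp hinj
  have hφsurj : Function.Surjective φ := Function.Surjective.of_comp hsurj
  have hkey : ∀ μ : F, Submodule.map φ (Module.End.eigenspace (ψ ∘ₗ φ) μ)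
      ≤ Module.End.eigenspace (φ ∘ₗ ψ) μ := by
    intro μ v hv
    obtain ⟨x, hx, rfl⟩ := hv
    rw [SetLike.mem_coe, Module.End.mem_eigenspace_iff] at hx
    rw [Module.End.mem_eigenspace_iff]
    have : (φ ∘ₗ ψ) (φ x) = φ ((ψ ∘ₗ φ) x) := rfl
    rw [this, hx, map_smul]
  rw [eq_top_iff, ← LinearMap.range_eq_top.mpr hφsurj, LinearMap.range_eq_map,
    ← hdiag, Submodule.map_iSup]
  exact iSup_mono hkey
end

section
/- Let U, V be finite-dimensional vector spaces over a field, φ : U → V, ψ : V → U linear. If ψ ∘ φ is diagonalizable with nonzero eigenvalues λ_1, ..., λ_t, then the minimal polynomial of φ ∘ ψ divides (x − λ_1)···(x − λ_t)·x². -/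
/-!
Diagonalizability of `ψ ∘ φ` with nonzero eigenvalues in `Λ` means that `(∏ (X - λ)) * X`
annihilates it. Since `(φ ∘ ψ) ∘ q(φ ∘ ψ) = φ ∘ q(ψ ∘ φ) ∘ ψ` for every polynomial `q`, one more
factor `X` turns this into a polynomial annihilating `φ ∘ ψ`.
-/

open Polynomial

namespace LinearMap

variable {R M N : Type*} [CommSemiring R] [AddCommMonoid M] [Module R M]
  [AddCommMonoid N] [Module R N]

theorem comp_aeval_of_comp_eq {f : Module.End R M} {g : Module.End R N} (T : M →ₗ[R] N)
    (hT : T ∘ₗ f = g ∘ₗ T) (p : R[X]) :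
    T ∘ₗ aeval f p = aeval g p ∘ₗ T := by
  induction p using Polynomial.induction_on with
  | C a => ext x; simp
  | add p q hp hq => rw [map_add, map_add, comp_add, add_comp, hp, hq]
  | monomial n a ih =>
    rw [pow_succ, ← mul_assoc, map_mul (aeval f) _ X, map_mul (aeval g) _ X, aeval_X, aeval_X,
      Module.End.mul_eq_comp, Module.End.mul_eq_comp, ← comp_assoc, ih, comp_assoc, hT, comp_assoc]

theorem aeval_comp_X_mul (φ : M →ₗ[R] N) (ψ : N →ₗ[R] M) (p : R[X]) :
    aeval (φ ∘ₗ ψ) (X * p) = φ ∘ₗ aeval (ψ ∘ₗ φ) p ∘ₗ ψ := by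
  rw [map_mul, aeval_X, Module.End.mul_eq_comp, comp_assoc,
    comp_aeval_of_comp_eq ψ (comp_assoc ψ φ ψ).symm]

end LinearMap

namespace Module.End

variable {R M : Type*} [CommRing R] [AddCommGroup M] [Module R M]

theorem aeval_eq_zero_of_iSup_eigenspace_eq_top {f : Module.End R M}
    (hf : ⨆ μ, f.eigenspace μ = ⊤) {p : R[X]} (hp : ∀ μ, f.HasEigenvalue μ → p.IsRoot μ) :
    aeval f p = 0 := by
  rw [← LinearMap.ker_eq_top, eq_top_iff, ← hf, iSup_le_iff]
  intro μ x hx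
  rw [LinearMap.mem_ker, aeval_apply_of_mem_apply_eq_smul (mem_eigenspace_iff.mp hx)]
  by_cases hμ : f.HasEigenvalue μ
  · rw [(hp μ hμ).eq_zero, zero_smul]
  · rw [hasEigenvalue_iff, not_not] at hμ
    rw [hμ, Submodule.mem_bot] at hx
    rw [hx, smul_zero]

end Module.End

theorem stmt_6_general {F : Type*} [Field F] {U V : Type*}
    [AddCommGroup U] [Module F U]
    [AddCommGroup V] [Module F V]
    (φ : U →ₗ[F] V) (ψ : V →ₗ[F] U) (Λ : Finset F)
    (hdiag : ⨆ μ : F, Module.End.eigenspace (ψ ∘ₗ φ) μ = ⊤)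
    (hΛ : ∀ μ : F, μ ≠ 0 → (Module.End.HasEigenvalue (ψ ∘ₗ φ) μ ↔ μ ∈ Λ)) :
    minpoly F (φ ∘ₗ ψ) ∣ (∏ μ ∈ Λ, (X - C μ)) * X ^ 2 := by
  have hroots : ∀ μ, Module.End.HasEigenvalue (ψ ∘ₗ φ) μ →
      ((∏ μ ∈ Λ, (X - C μ)) * X).IsRoot μ := by
    intro μ hμ
    rcases eq_or_ne μ 0 with rfl | hμ0
    · exact root_mul_left_of_isRoot _ (by simp)
    · refine root_mul_right_of_isRoot _ ?_
      rw [IsRoot, eval_prod]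
      exact Finset.prod_eq_zero ((hΛ μ hμ0).mp hμ) (by simp)
  apply minpoly.dvd
  rw [show (∏ μ ∈ Λ, (X - C μ)) * X ^ 2 = X * ((∏ μ ∈ Λ, (X - C μ)) * X) by ring,
    φ.aeval_comp_X_mul, Module.End.aeval_eq_zero_of_iSup_eigenspace_eq_top hdiag hroots,
    LinearMap.zero_comp, LinearMap.comp_zero]

theorem stmt_6 {F : Type*} [Field F] {U V : Type*}
    [AddCommGroup U] [Module F U] [FiniteDimensional F U]
    [AddCommGroup V] [Module F V] [FiniteDimensional F V]
    (φ : U →ₗ[F] V) (ψ : V →ₗ[F] U) (Λ : Finset F) (h0 : (0 : F) ∉ Λ)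
    (hdiag : ⨆ μ : F, Module.End.eigenspace (ψ ∘ₗ φ) μ = ⊤)
    (hΛ : ∀ μ : F, μ ≠ 0 → (Module.End.HasEigenvalue (ψ ∘ₗ φ) μ ↔ μ ∈ Λ)) :
    minpoly F (φ ∘ₗ ψ) ∣ (∏ μ ∈ Λ, (X - C μ)) * X ^ 2 :=
  stmt_6_general φ ψ Λ hdiag hΛ
end

section
/- For the hyperoctahedron H^n, the B-type identity ν⁺_k − ν⁻_k = (2n − 3k)·Id − σ_k holds on the face module M^n_k, where ν⁺_k = ∂_{k+1}∘ε_k, ν⁻_k = ε_{k−1}∘∂_k, and σ_k is the 'flip one vertex' map. -/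
open Finset

/-- A face of the hyperoctahedron on `2n` paired vertices `(i, b)`,
where `(i, true) = αᵢ` and `(i, false) = ᾱᵢ`. -/
def IsFace {n : ℕ} (x : Finset (Fin n × Bool)) : Prop :=
  ∀ p ∈ x, ∀ q ∈ x, p.1 = q.1 → p.2 = q.2

instance {n : ℕ} (x : Finset (Fin n × Bool)) : Decidable (IsFace x) := by
  unfold IsFace; infer_instance

/-- The opposite vertex. -/
def oppv {n : ℕ} (p : Fin n × Bool) : Fin n × Bool := (p.1, !p.2)

/-- Coboundary `ε(x) = Σ { y a face : x ⊆ y, |y| = |x| + 1 }` on the module of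
formal `F`-linear combinations of subsets of the vertex set. -/
noncomputable def eps (F : Type*) [CommRing F] (n : ℕ) :
    (Finset (Fin n × Bool) →₀ F) →ₗ[F] (Finset (Fin n × Bool) →₀ F) :=
  Finsupp.lsum F fun x => LinearMap.toSpanSingleton F _
    (∑ y ∈ Finset.univ.filter
        (fun y : Finset (Fin n × Bool) => IsFace y ∧ x ⊆ y ∧ y.card = x.card + 1),
      Finsupp.single y (1 : F))

/-- Boundary `∂(x) = Σ { z : z ⊆ x, |z| + 1 = |x| }`. -/
noncomputable def bnd (F : Type*) [CommRing F] (n : ℕ) :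
    (Finset (Fin n × Bool) →₀ F) →ₗ[F] (Finset (Fin n × Bool) →₀ F) :=
  Finsupp.lsum F fun x => LinearMap.toSpanSingleton F _
    (∑ z ∈ Finset.univ.filter
        (fun z : Finset (Fin n × Bool) => z ⊆ x ∧ z.card + 1 = x.card),
      Finsupp.single z (1 : F))

/-- The flip map `σ(x) = Σ_{γ ∈ x} ((x \ γ) ∪ {γ̄})`. -/
noncomputable def sigmaMap (F : Type*) [CommRing F] (n : ℕ) :
    (Finset (Fin n × Bool) →₀ F) →ₗ[F] (Finset (Fin n × Bool) →₀ F) :=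
  Finsupp.lsum F fun x => LinearMap.toSpanSingleton F _
    (∑ γ ∈ x, Finsupp.single (insert (oppv γ) (x.erase γ)) (1 : F))

/-!
Write `ε(x)` as the sum of `x ∪ {v}` over the `2n - 2k` free vertices `v` of `x` (those with
`v, v̄ ∉ x`) and `∂(y)` as the sum of `y \ {u}` over `u ∈ y`. Both `∂ε(x)` and `ε∂(x)` then contain
the sum of `(x \ {u}) ∪ {v}` over `u ∈ x` and free `v`. Besides it, `∂ε(x)` has `(2n - 2k)·x`
from removing `v` again, while `ε∂(x)` has `k·x + σ(x)`, because the free vertices of `x \ {u}`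
are those of `x` together with `u` and `ū`.
-/

section

variable {n : ℕ}

lemma oppv_involutive : Function.Involutive (oppv (n := n)) := fun p => by
  simp [oppv]

lemma oppv_ne_self (p : Fin n × Bool) : oppv p ≠ p := by
  simp [oppv, Prod.ext_iff]

lemma isFace_iff_oppv_notMem {x : Finset (Fin n × Bool)} :
    IsFace x ↔ ∀ p ∈ x, oppv p ∉ x := by
  refine ⟨fun hx p hp hop => by simpa [oppv] using hx p hp _ hop rfl, fun hx p hp q hq hpq => ?_⟩
  by_contra hne
  obtain ⟨i, a⟩ := p
  obtain ⟨j, b⟩ := q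
  obtain rfl : i = j := hpq
  obtain rfl : b = !a := by revert hne; cases a <;> cases b <;> simp
  exact hx _ hp hq

lemma IsFace.oppv_notMem {x : Finset (Fin n × Bool)} (hx : IsFace x) {p : Fin n × Bool}
    (hp : p ∈ x) : oppv p ∉ x :=
  isFace_iff_oppv_notMem.mp hx p hp

lemma IsFace.subset {x y : Finset (Fin n × Bool)} (hy : IsFace y) (hxy : x ⊆ y) : IsFace x :=
  fun p hp q hq => hy p (hxy hp) q (hxy hq)

lemma IsFace.insert {x : Finset (Fin n × Bool)} (hx : IsFace x) {v : Fin n × Bool}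
    (hv : oppv v ∉ x) : IsFace (insert v x) := by
  refine isFace_iff_oppv_notMem.mpr fun p hp => ?_
  rcases mem_insert.mp hp with rfl | hp
  · simpa [oppv_ne_self] using hv
  · have : oppv p ≠ v := fun h => hv (h ▸ (oppv_involutive p).symm ▸ hp)
    simpa [this] using hx.oppv_notMem hp

lemma IsFace.card_le {x : Finset (Fin n × Bool)} (hx : IsFace x) : #x ≤ n := by
  simpa using card_le_card_of_injOn Prod.fst (fun _ _ => mem_univ _)
    fun p hp q hq hpq => Prod.ext hpq (hx p hp q hq hpq)

def freeVertices (x : Finset (Fin n × Bool)) : Finset (Fin n × Bool) :=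
  univ.filter fun v => v ∉ x ∧ oppv v ∉ x

@[simp]
lemma mem_freeVertices {x : Finset (Fin n × Bool)} {v : Fin n × Bool} :
    v ∈ freeVertices x ↔ v ∉ x ∧ oppv v ∉ x := by
  simp [freeVertices]

lemma card_freeVertices_add {x : Finset (Fin n × Bool)} (hx : IsFace x) :
    #(freeVertices x) + 2 * #x = 2 * n := by
  have hfree : freeVertices x = (x ∪ x.image oppv)ᶜ := by
    ext v
    simp [oppv_involutive.eq_iff]
  have hdisj : Disjoint x (x.image oppv) := by
    simp only [disjoint_left, mem_image, not_exists, not_and]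
    exact fun p hp q hq hqp => hx.oppv_notMem hq (hqp ▸ hp)
  rw [hfree, card_compl, card_union_of_disjoint hdisj,
    card_image_of_injective _ oppv_involutive.injective]
  simp only [Fintype.card_prod, Fintype.card_fin, Fintype.card_bool]
  have := hx.card_le
  omega

lemma freeVertices_erase {x : Finset (Fin n × Bool)} (hx : IsFace x) {u : Fin n × Bool}
    (hu : u ∈ x) : freeVertices (x.erase u) = insert u (insert (oppv u) (freeVertices x)) := by
  ext v
  have hou := hx.oppv_notMem hu
  by_cases hvu : v = u
  · simp [hvu, hou]
  by_cases hvo : v = oppv u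
  · simp [hvo, oppv_involutive u, hou]
  have hovu : oppv v ≠ u := fun h => hvo (h ▸ (oppv_involutive v).symm)
  simp [hvu, hvo, hovu]

section Operators

variable (F : Type*) [CommRing F]

lemma eps_single {x : Finset (Fin n × Bool)} (hx : IsFace x) :
    eps F n (Finsupp.single x 1) = ∑ v ∈ freeVertices x, Finsupp.single (insert v x) 1 := by
  have himage : univ.filter (fun y => IsFace y ∧ x ⊆ y ∧ #y = #x + 1)
      = (freeVertices x).image (insert · x) := by
    ext y
    simp only [mem_filter, mem_univ, true_and, mem_image, mem_freeVertices]
    constructor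
    · rintro ⟨hy, hxy, hcard⟩
      obtain ⟨v, hv, rfl⟩ := exists_eq_insert_iff.mpr ⟨hxy, hcard.symm⟩
      exact ⟨v, ⟨hv, fun h => hy.oppv_notMem (mem_insert_self v x) (mem_insert_of_mem h)⟩, rfl⟩
    · rintro ⟨v, ⟨hv, hov⟩, rfl⟩
      exact ⟨hx.insert hov, subset_insert v x, card_insert_of_notMem hv⟩
  rw [eps, Finsupp.lsum_single, LinearMap.toSpanSingleton_apply, one_smul, himage,
    sum_image fun v hv w _ h => (insert_inj (mem_freeVertices.mp hv).1).mp h]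

lemma bnd_single (y : Finset (Fin n × Bool)) :
    bnd F n (Finsupp.single y 1) = ∑ u ∈ y, Finsupp.single (y.erase u) 1 := by
  have himage : univ.filter (fun z => z ⊆ y ∧ #z + 1 = #y) = y.image y.erase := by
    ext z
    simp only [mem_filter, mem_univ, true_and, mem_image, ← exists_eq_insert_iff]
    constructor
    · rintro ⟨u, hu, rfl⟩
      exact ⟨u, mem_insert_self u z, erase_insert hu⟩
    · rintro ⟨u, hu, rfl⟩
      exact ⟨u, notMem_erase u y, insert_erase hu⟩
  rw [bnd, Finsupp.lsum_single, LinearMap.toSpanSingleton_apply, one_smul, himage,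
    sum_image y.erase_injOn]

lemma sigmaMap_single (x : Finset (Fin n × Bool)) :
    sigmaMap F n (Finsupp.single x 1) =
      ∑ γ ∈ x, Finsupp.single (insert (oppv γ) (x.erase γ)) 1 := by
  rw [sigmaMap, Finsupp.lsum_single, LinearMap.toSpanSingleton_apply, one_smul]

lemma bnd_eps_single {x : Finset (Fin n × Bool)} (hx : IsFace x) :
    bnd F n (eps F n (Finsupp.single x 1)) =
      #(freeVertices x) • Finsupp.single x 1 +
        ∑ v ∈ freeVertices x, ∑ u ∈ x, Finsupp.single (insert v (x.erase u)) 1 := by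
  rw [eps_single F hx, map_sum, ← sum_const, ← sum_add_distrib]
  refine sum_congr rfl fun v hv => ?_
  have hvx : v ∉ x := (mem_freeVertices.mp hv).1
  rw [bnd_single, sum_insert hvx, erase_insert hvx]
  congr 1
  refine sum_congr rfl fun u hu => ?_
  rw [erase_insert_of_ne (ne_of_mem_of_not_mem hu hvx).symm]

lemma eps_bnd_single {x : Finset (Fin n × Bool)} (hx : IsFace x) :
    eps F n (bnd F n (Finsupp.single x 1)) =
      #x • Finsupp.single x 1 + sigmaMap F n (Finsupp.single x 1) +
        ∑ u ∈ x, ∑ v ∈ freeVertices x, Finsupp.single (insert v (x.erase u)) 1 := by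
  rw [bnd_single, map_sum, sigmaMap_single, ← sum_const, ← sum_add_distrib, ← sum_add_distrib]
  refine sum_congr rfl fun u hu => ?_
  rw [eps_single F (hx.subset (erase_subset u x)), freeVertices_erase hx hu,
    sum_insert, sum_insert, insert_erase hu, add_assoc]
  · simp [oppv_involutive u, hu]
  · simp [hu, oppv_ne_self u |>.symm]

end Operators

end

theorem stmt_9_general {F : Type*} [CommRing F] (n k : ℕ)
    (x : Finset (Fin n × Bool)) (hx : IsFace x) (hcard : x.card = k) :
    bnd F n (eps F n (Finsupp.single x 1)) - eps F n (bnd F n (Finsupp.single x 1))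
      = (2 * (n : F) - 3 * (k : F)) • Finsupp.single x 1
        - sigmaMap F n (Finsupp.single x 1) := by
  have hfree : (#(freeVertices x) : F) = 2 * n - 2 * k := by
    have := congrArg (Nat.cast : ℕ → F) (card_freeVertices_add hx)
    push_cast [hcard] at this
    linear_combination this
  rw [bnd_eps_single F hx, eps_bnd_single F hx, sum_comm, ← Nat.cast_smul_eq_nsmul F,
    ← Nat.cast_smul_eq_nsmul F, hfree, hcard]
  module

theorem stmt_9 {F : Type*} [CommRing F] (n k : ℕ) (hk : k ≤ n)
    (x : Finset (Fin n × Bool)) (hx : IsFace x) (hcard : x.card = k) :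
    bnd F n (eps F n (Finsupp.single x 1)) - eps F n (bnd F n (Finsupp.single x 1))
      = (2 * (n : F) - 3 * (k : F)) • Finsupp.single x 1
        - sigmaMap F n (Finsupp.single x 1) :=
  stmt_9_general n k x hx hcard
end

section
/- For the hyperoctahedron in characteristic p > n or p = 0, σ_k : M^n_k → M^n_k is diagonalizable with exactly the eigenvalues k − 2j for 0 ≤ j ≤ k, and the eigenspace for k − 2j has dimension C(n,k)·C(k,j). -/
open Finset

/-- The `k`-dimensional faces of the hyperoctahedron `H^n`. -/
def FaceK (n k : ℕ) : Type :=
  {x : Finset (Fin n × Bool) // IsFace x ∧ x.card = k}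

noncomputable instance (n k : ℕ) : Fintype (FaceK n k) := by
  unfold FaceK; infer_instance

/-- The flip map `σₖ(x) = Σ_{γ ∈ x} ((x \ γ) ∪ {γ̄})` on the face module
`Mⁿₖ = F L^n_k`. -/
noncomputable def sigmaK (F : Type*) [Field F] (n k : ℕ) :
    Module.End F (FaceK n k →₀ F) :=
  Finsupp.lsum F fun x => LinearMap.toSpanSingleton F _
    (∑ y ∈ Finset.univ.filter
        (fun y : FaceK n k => ∃ γ ∈ x.1, y.1 = insert (oppv γ) (x.1.erase γ)),
      Finsupp.single y (1 : F))

/-!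
A `k`-face is determined by its support `S ⊆ [n]`, `|S| = k`, and a sign `ε : S → Bool`. The flip
map preserves the support and acts on the signs as the adjacency operator of the cube `Bool^S`,
whose eigenvectors are the Walsh characters `χ_T(ε) = ∏_{i ∈ T} (-1)^{ε i}`, `T ⊆ S`, with
eigenvalue `k - 2|T|`. The orthogonality relation `∑_T χ_T(ε) χ_T(ε') = 2^k δ_{ε ε'}` shows that
the Walsh vectors span as soon as `2` is invertible, so they form an eigenbasis with
`C(n,k) C(k,j)` members for `|T| = j`; the hypothesis on the characteristic makes the values
`k - 2j` pairwise distinct.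
-/

namespace Module.End

variable {K V ι : Type*} [Field K] [AddCommGroup V] [Module K V]
  {f : Module.End K V} {b : Basis ι K V} {d : ι → K}

lemma repr_apply_eq_mul_of_apply_basis (hf : ∀ i, f (b i) = d i • b i) (v : V) (i : ι) :
    b.repr (f v) i = d i * b.repr v i := by
  have : b.coord i ∘ₗ f = d i • b.coord i :=
    b.ext fun j => by
      rcases eq_or_ne j i with rfl | hji
      · simp [hf]
      · simp [hf, hji]
  exact LinearMap.congr_fun this v

lemma eigenspace_eq_span_of_apply_basis (hf : ∀ i, f (b i) = d i • b i) (μ : K) :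
    eigenspace f μ = Submodule.span K (b '' {i | d i = μ}) := by
  refine le_antisymm (fun v hv => b.mem_span_image.2 fun i hi => ?_) (Submodule.span_le.2 ?_)
  · have hv : b.repr (f v) i = b.repr (μ • v) i := by rw [mem_eigenspace_iff.1 hv]
    rw [repr_apply_eq_mul_of_apply_basis hf, map_smul, Finsupp.smul_apply, smul_eq_mul] at hv
    exact mul_right_cancel₀ (Finsupp.mem_support_iff.1 hi) hv
  · rintro - ⟨i, rfl : d i = μ, rfl⟩
    exact mem_eigenspace_iff.2 (hf i)

lemma finrank_eigenspace_of_apply_basis [Finite ι] (hf : ∀ i, f (b i) = d i • b i) (μ : K) :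
    Module.finrank K (eigenspace f μ) = Nat.card {i // d i = μ} := by
  have := Fintype.ofFinite ι
  classical
  rw [eigenspace_eq_span_of_apply_basis hf, Set.image_eq_range]
  exact (finrank_span_eq_card (b.linearIndependent.comp _ Subtype.val_injective)).trans
    Nat.card_eq_fintype_card.symm

lemma hasEigenvalue_iff_of_apply_basis (hf : ∀ i, f (b i) = d i • b i) (μ : K) :
    HasEigenvalue f μ ↔ ∃ i, d i = μ := by
  rw [hasEigenvalue_iff, eigenspace_eq_span_of_apply_basis hf, Ne, Submodule.span_eq_bot]
  simp [b.ne_zero]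

lemma iSup_eigenspace_eq_top_of_apply_basis (hf : ∀ i, f (b i) = d i • b i) :
    ⨆ μ, eigenspace f μ = ⊤ :=
  (Submodule.eq_top_iff_forall_basis_mem b).2 fun i =>
    Submodule.mem_iSup_of_mem (d i) (mem_eigenspace_iff.2 (hf i))

end Module.End

section Hypercube

variable {ι R M : Type*} [DecidableEq ι] [CommRing R] [AddCommGroup M] [Module R M]

def flipAt (i : ι) (ε : ι → Bool) : ι → Bool := Function.update ε i (!ε i)

lemma flipAt_involutive (i : ι) : Function.Involutive (flipAt i) := fun ε => by
  funext j
  rcases eq_or_ne j i with rfl | hji <;> simp [flipAt, *]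

lemma flipAt_left_injective (ε : ι → Bool) : Function.Injective (flipAt · ε) := fun i j h => by
  by_contra hij
  simpa [flipAt, hij] using congrFun h i

variable (R) in
def walshChar (T : Finset ι) (ε : ι → Bool) : R := ∏ i ∈ T, if ε i then -1 else 1

lemma walshChar_flipAt (T : Finset ι) (ε : ι → Bool) (i : ι) :
    walshChar R T (flipAt i ε) = (if i ∈ T then -1 else 1) * walshChar R T ε := by
  unfold walshChar
  split_ifs with hi
  · rw [← mul_prod_erase T _ hi, ← mul_prod_erase T _ hi,
      prod_congr rfl fun j hj => by rw [flipAt, Function.update_of_ne (ne_of_mem_erase hj)]]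
    cases h : ε i <;> simp [flipAt, h]
  · rw [one_mul]
    exact prod_congr rfl fun j hj => by
      rw [flipAt, Function.update_of_ne (ne_of_mem_of_not_mem hj hi)]

variable [Fintype ι]

lemma sum_ite_mem_neg_one_one (T : Finset ι) :
    ∑ i, (if i ∈ T then -1 else 1 : R) = (Fintype.card ι : R) - 2 * #T := by
  have h : ∀ i, (if i ∈ T then -1 else 1 : R) = 1 - 2 * if i ∈ T then 1 else 0 := fun i => by
    split_ifs <;> ring
  simp_rw [h, sum_sub_distrib, ← mul_sum, sum_boole]
  simp

lemma sum_walshChar_mul_walshChar (ε ε' : ι → Bool) :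
    ∑ T : Finset ι, walshChar R T ε * walshChar R T ε' =
      if ε = ε' then 2 ^ Fintype.card ι else 0 := by
  -- `∑_T ∏_{i ∈ T} a i = ∏_i (a i + 1)`, and here `a i + 1` is `2` or `0` according as `ε i = ε' i`
  have h := Fintype.prod_add (fun i => (if ε i then -1 else 1) * (if ε' i then (-1 : R) else 1))
    (fun _ => 1)
  simp only [prod_const_one, mul_one] at h
  simp_rw [walshChar, ← prod_mul_distrib, ← h]
  split_ifs with hεε'
  · subst hεε'
    simp only [← Finset.card_univ, ← prod_const]
    exact prod_congr rfl fun i _ => by split_ifs <;> norm_num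
  · obtain ⟨i, hi⟩ := Function.ne_iff.1 hεε'
    refine prod_eq_zero (mem_univ i) ?_
    revert hi
    cases ε i <;> cases ε' i <;> simp

lemma sum_walshChar_smul_sum_flipAt (T : Finset ι) (v : (ι → Bool) → M) :
    ∑ ε, walshChar R T ε • ∑ i, v (flipAt i ε) =
      ((Fintype.card ι : R) - 2 * #T) • ∑ ε, walshChar R T ε • v ε := by
  have hflip : ∀ i, ∑ ε, walshChar R T ε • v (flipAt i ε) =
      (if i ∈ T then -1 else 1 : R) • ∑ ε, walshChar R T ε • v ε := fun i => by
    rw [smul_sum]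
    refine Fintype.sum_equiv (flipAt_involutive i).toPerm _ _ fun ε => ?_
    simp only [Function.Involutive.coe_toPerm, walshChar_flipAt, mul_smul]
    split_ifs <;> simp
  calc ∑ ε, walshChar R T ε • ∑ i, v (flipAt i ε)
      = ∑ i, ∑ ε, walshChar R T ε • v (flipAt i ε) := by simp_rw [smul_sum]; exact sum_comm
    _ = ∑ i, (if i ∈ T then -1 else 1 : R) • ∑ ε, walshChar R T ε • v ε :=
        sum_congr rfl fun i _ => hflip i
    _ = _ := by rw [← sum_smul, sum_ite_mem_neg_one_one]

lemma sum_walshChar_smul_sum_walshChar_smul (ε : ι → Bool) (v : (ι → Bool) → M) :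
    ∑ T, walshChar R T ε • ∑ ε', walshChar R T ε' • v ε' =
      (2 ^ Fintype.card ι : R) • v ε := by
  simp_rw [smul_sum, smul_smul]
  rw [sum_comm]
  simp_rw [← sum_smul, sum_walshChar_mul_walshChar, ite_smul, zero_smul]
  simp

end Hypercube

section Faces

variable {n k : ℕ}

def signedSet (S : Finset (Fin n)) (ε : S → Bool) : Finset (Fin n × Bool) :=
  univ.image fun i : S => ((i : Fin n), ε i)

lemma mem_signedSet {S : Finset (Fin n)} {ε : S → Bool} {a : Fin n} {b : Bool} :
    (a, b) ∈ signedSet S ε ↔ ∃ h : a ∈ S, ε ⟨a, h⟩ = b := by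
  simp [signedSet]

lemma isFace_signedSet (S : Finset (Fin n)) (ε : S → Bool) : IsFace (signedSet S ε) := by
  rintro ⟨a, b⟩ hab ⟨a', b'⟩ hab' (rfl : a = a')
  obtain ⟨h, rfl⟩ := mem_signedSet.1 hab
  obtain ⟨h', rfl⟩ := mem_signedSet.1 hab'
  rfl

lemma card_signedSet (S : Finset (Fin n)) (ε : S → Bool) : #(signedSet S ε) = #S := by
  rw [signedSet, card_image_of_injective _ fun i j h => Subtype.ext (congrArg Prod.fst h),
    card_univ, Fintype.card_coe]

lemma image_fst_signedSet (S : Finset (Fin n)) (ε : S → Bool) :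
    (signedSet S ε).image Prod.fst = S := by
  ext a
  simp [signedSet]

lemma insert_oppv_erase_signedSet (S : Finset (Fin n)) (ε : S → Bool) (i : S) :
    insert (oppv ((i : Fin n), ε i)) ((signedSet S ε).erase ((i : Fin n), ε i)) =
      signedSet S (flipAt i ε) := by
  ext ⟨a, b⟩
  by_cases ha : a ∈ S
  · lift a to S using ha
    rcases eq_or_ne a i with rfl | hai
    · cases b <;> cases h : ε a <;> simp [oppv, mem_signedSet, flipAt, h]
    · simp [oppv, mem_signedSet, flipAt, hai, Subtype.coe_ne_coe.2 hai]
  · have hai : a ≠ i := fun h => ha (h ▸ i.2)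
    simp [oppv, mem_signedSet, ha, hai]

def signedFace (S : {S : Finset (Fin n) // #S = k}) (ε : S.1 → Bool) : FaceK n k :=
  ⟨signedSet S ε, isFace_signedSet _ _, (card_signedSet _ _).trans S.2⟩

lemma signedFace_bijective :
    Function.Bijective (Sigma.uncurry (signedFace (n := n) (k := k))) := by
  constructor
  · rintro ⟨⟨S, hS⟩, ε⟩ ⟨⟨S', hS'⟩, ε'⟩ h
    have h : signedSet S ε = signedSet S' ε' := congrArg Subtype.val h
    obtain rfl : S = S' := by rw [← image_fst_signedSet S ε, h, image_fst_signedSet]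
    obtain rfl : ε = ε' := funext fun i => by
      have hi : ((i : Fin n), ε i) ∈ signedSet S ε' := h ▸ mem_signedSet.2 ⟨i.2, rfl⟩
      exact (mem_signedSet.1 hi).2.symm
    rfl
  · rintro ⟨x, hx, rfl⟩
    refine ⟨⟨⟨x.image Prod.fst, card_image_of_injOn fun p hp q hq h => Prod.ext h (hx p hp q hq h)⟩,
      fun i => decide ((i.1, true) ∈ x)⟩, Subtype.ext ?_⟩
    ext ⟨a, b⟩
    simp only [Sigma.uncurry, signedFace, mem_signedSet]
    have hfalse : (a, false) ∈ x → (a, true) ∉ x := fun hf ht => by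
      simpa using hx _ hf _ ht rfl
    cases b <;> simp
    · exact ⟨fun ⟨h, ht⟩ => h.resolve_right ht, fun hf => ⟨Or.inl hf, hfalse hf⟩⟩
    · exact Or.inr

variable (F : Type*) [Field F]

lemma sigmaK_single_signedFace (S : {S : Finset (Fin n) // #S = k}) (ε : S.1 → Bool) :
    sigmaK F n k (Finsupp.single (signedFace S ε) 1) =
      ∑ i, Finsupp.single (signedFace S (flipAt i ε)) 1 := by
  classical
  have hflips : univ.filter (fun y : FaceK n k =>
        ∃ γ ∈ (signedFace S ε).1, y.1 = insert (oppv γ) ((signedFace S ε).1.erase γ)) =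
      univ.image fun i => signedFace S (flipAt i ε) := by
    ext y
    simp only [mem_filter, mem_univ, true_and, mem_image]
    constructor
    · rintro ⟨γ, hγ, hy⟩
      obtain ⟨i, -, rfl⟩ := mem_image.1 hγ
      exact ⟨i, Subtype.ext (hy.trans (insert_oppv_erase_signedSet _ ε i)).symm⟩
    · rintro ⟨i, rfl⟩
      exact ⟨_, mem_image_of_mem _ (mem_univ i), (insert_oppv_erase_signedSet _ ε i).symm⟩
  have hinj : Set.InjOn (fun i => signedFace S (flipAt i ε)) (univ : Finset S.1) :=
    fun i _ j _ h => flipAt_left_injective ε (eq_of_heq (Sigma.mk.inj (signedFace_bijective.1 h)).2)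
  rw [sigmaK, Finsupp.lsum_single, LinearMap.toSpanSingleton_apply, one_smul, hflips,
    sum_image hinj]

end Faces

section WalshBasis

variable (F : Type*) [Field F] {n k : ℕ}

abbrev WalshIndex (n k : ℕ) : Type := Σ S : {S : Finset (Fin n) // #S = k}, Finset S.1

noncomputable def walshVector (x : WalshIndex n k) : FaceK n k →₀ F :=
  ∑ ε, walshChar F x.2 ε • Finsupp.single (signedFace x.1 ε) 1

lemma sigmaK_walshVector (x : WalshIndex n k) :
    sigmaK F n k (walshVector F x) = ((k : F) - 2 * #x.2) • walshVector F x := by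
  simp_rw [walshVector, map_sum, map_smul, sigmaK_single_signedFace]
  have := sum_walshChar_smul_sum_flipAt (R := F) x.2
    fun ε => Finsupp.single (signedFace x.1 ε) (1 : F)
  rwa [Fintype.card_coe, x.1.2] at this

lemma smul_single_signedFace_eq_sum_walshVector (S : {S : Finset (Fin n) // #S = k})
    (ε : S.1 → Bool) :
    (2 ^ k : F) • Finsupp.single (signedFace S ε) 1 =
      ∑ T, walshChar F T ε • walshVector F ⟨S, T⟩ := by
  have := sum_walshChar_smul_sum_walshChar_smul (R := F) ε
    fun ε => Finsupp.single (signedFace S ε) (1 : F)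
  rw [Fintype.card_coe, S.2] at this
  exact this.symm

lemma top_le_span_walshVector (h2 : (2 : F) ≠ 0) :
    ⊤ ≤ Submodule.span F (Set.range (walshVector F (n := n) (k := k))) := by
  rw [← Finsupp.basisSingleOne.span_eq, Finsupp.coe_basisSingleOne, Submodule.span_le]
  rintro - ⟨y, rfl⟩
  obtain ⟨⟨S, ε⟩, rfl⟩ := signedFace_bijective.2 y
  change Finsupp.single (signedFace S ε) (1 : F) ∈ _
  rw [← inv_smul_smul₀ (pow_ne_zero k h2) (Finsupp.single _ _),
    smul_single_signedFace_eq_sum_walshVector]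
  exact Submodule.smul_mem _ _ (Submodule.sum_mem _ fun T _ =>
    Submodule.smul_mem _ _ (Submodule.subset_span ⟨⟨S, T⟩, rfl⟩))

lemma card_walshIndex : Fintype.card (WalshIndex n k) = Module.finrank F (FaceK n k →₀ F) := by
  rw [Module.finrank_finsupp_self, ← Fintype.card_of_bijective signedFace_bijective,
    Fintype.card_sigma, Fintype.card_sigma]
  simp [Fintype.card_finset]

noncomputable def walshBasis (h2 : (2 : F) ≠ 0) :
    Module.Basis (WalshIndex n k) F (FaceK n k →₀ F) :=
  basisOfTopLeSpanOfCardEqFinrank _ (top_le_span_walshVector F h2) (card_walshIndex F)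

lemma sigmaK_walshBasis (h2 : (2 : F) ≠ 0) (x : WalshIndex n k) :
    sigmaK F n k (walshBasis F h2 x) = ((k : F) - 2 * #x.2) • walshBasis F h2 x := by
  rw [walshBasis, coe_basisOfTopLeSpanOfCardEqFinrank, sigmaK_walshVector]

lemma natCard_walshIndex_card_eq (j : ℕ) :
    Nat.card {x : WalshIndex n k // #x.2 = j} = n.choose k * k.choose j := by
  let e : {x : WalshIndex n k // #x.2 = j} ≃
      Σ S : {S : Finset (Fin n) // #S = k}, {T : Finset S.1 // #T = j} :=
    { toFun := fun x => ⟨x.1.1, x.1.2, x.2⟩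
      invFun := fun y => ⟨⟨y.1, y.2.1⟩, y.2.2⟩
      left_inv := fun _ => rfl
      right_inv := fun _ => rfl }
  rw [Nat.card_congr e, Nat.card_eq_fintype_card, Fintype.card_sigma]
  simp only [Fintype.card_finset_len, Fintype.card_coe]
  rw [sum_congr rfl fun S _ => by rw [S.2]]
  simp [Fintype.card_finset_len]

end WalshBasis

section CharP

variable {F : Type*} [Field F] {n : ℕ}

lemma natCast_injOn_Iic_of_charP (p : ℕ) [CharP F p] (hp : p = 0 ∨ n < p) :
    (Set.Iic n).InjOn (Nat.cast : ℕ → F) := by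
  rcases hp with rfl | hnp
  · have := CharP.charP_to_charZero F
    exact Nat.cast_injective.injOn
  · exact (CharP.natCast_injOn_Iio F p).mono fun a ha => lt_of_le_of_lt ha hnp

lemma two_ne_zero_of_natCast_injOn_Iic (hcast : (Set.Iic n).InjOn (Nat.cast : ℕ → F))
    (hn : 2 ≤ n) : (2 : F) ≠ 0 := fun h =>
  two_ne_zero (hcast (Set.mem_Iic.2 hn) (Set.mem_Iic.2 n.zero_le) (by exact_mod_cast h))

lemma sub_two_mul_natCast_inj (hcast : (Set.Iic n).InjOn (Nat.cast : ℕ → F)) (hn : 2 ≤ n)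
    {a b : ℕ} (ha : a ≤ n) (hb : b ≤ n) (c : F) : c - 2 * a = c - 2 * b ↔ a = b :=
  ⟨fun h => hcast ha hb
    (mul_left_cancel₀ (two_ne_zero_of_natCast_injOn_Iic hcast hn) (sub_right_inj.1 h)),
    fun h => h ▸ rfl⟩

end CharP

theorem stmt_12 {F : Type*} [Field F] (p n k : ℕ) [CharP F p]
    (hp : p = 0 ∨ n < p) (hk : k ≤ n) (hn : 2 ≤ n) :
    (⨆ μ : F, Module.End.eigenspace (sigmaK F n k) μ) = ⊤ ∧
    (∀ μ : F, Module.End.HasEigenvalue (sigmaK F n k) μ ↔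
        ∃ j ≤ k, μ = (k : F) - 2 * (j : F)) ∧
    (∀ j ≤ k, Module.finrank F
        (Module.End.eigenspace (sigmaK F n k) ((k : F) - 2 * (j : F)))
      = n.choose k * k.choose j) := by
  have hcast := natCast_injOn_Iic_of_charP (F := F) p hp
  have hb := sigmaK_walshBasis F (two_ne_zero_of_natCast_injOn_Iic hcast hn) (n := n) (k := k)
  have hcard_le (x : WalshIndex n k) : #x.2 ≤ k := (card_le_univ x.2).trans_eq (by simp [x.1.2])
  have hrank (j : ℕ) (hj : j ≤ k) : Module.finrank F
      (Module.End.eigenspace (sigmaK F n k) ((k : F) - 2 * (j : F))) =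
        n.choose k * k.choose j := by
    rw [Module.End.finrank_eigenspace_of_apply_basis hb, ← natCard_walshIndex_card_eq j]
    exact Nat.card_congr (Equiv.subtypeEquivRight fun x =>
      sub_two_mul_natCast_inj hcast hn ((hcard_le x).trans hk) (hj.trans hk) _)
  refine ⟨Module.End.iSup_eigenspace_eq_top_of_apply_basis hb, fun μ => ?_, hrank⟩
  rw [Module.End.hasEigenvalue_iff_of_apply_basis hb]
  constructor
  · rintro ⟨x, rfl⟩
    exact ⟨#x.2, hcard_le x, rfl⟩
  · rintro ⟨j, hj, rfl⟩
    have hpos : 0 < Nat.card {x : WalshIndex n k // #x.2 = j} := by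
      rw [natCard_walshIndex_card_eq]
      exact Nat.mul_pos (Nat.choose_pos hk) (Nat.choose_pos hj)
    obtain ⟨⟨x, hx⟩⟩ := Nat.card_pos_iff.1 hpos |>.1
    exact ⟨x, by rw [hx]⟩
end

section
/- For integers 0 ≤ t ≤ k ≤ n with t + k ≤ n, one has Σ_{j=0}^{t} min{C(n,t)C(t,j), C(n,k)C(k,j)} = Σ_{j=0}^{t} C(n,t)C(t,j) = 2^t·C(n,t); i.e., the rank formula of the (t,k)-incidence matrix of H^n gives full rank equal to dim M^n_t when t + k ≤ n. -/
/-!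
Subset-of-subset counting gives `C(n,t) C(t,j) = C(n,j) C(n-j,t-j)`, so the comparison of the two
terms of each minimum reduces to `C(n-j,t-j) ≤ C(n-j,k-j)`. This holds by unimodality of the
binomial coefficients, because `t - j ≤ k - j` and `(t - j) + (k - j) ≤ n - j`. Hence every minimum
is its first term, and the binomial theorem sums them to `2^t C(n,t)`.
-/

namespace Nat

theorem choose_le_choose_of_le_of_le_half {m a c : ℕ} (hac : a ≤ c) (hc : c ≤ m / 2) :
    m.choose a ≤ m.choose c := by
  induction hac using Nat.decreasingInduction with
  | self => rfl
  | of_succ i hi ih => exact (choose_le_succ_of_lt_half_left (hi.trans_le hc)).trans ih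

theorem choose_le_choose_of_le_of_add_le {m a b : ℕ} (hab : a ≤ b) (habm : a + b ≤ m) :
    m.choose a ≤ m.choose b := by
  rcases le_or_gt b (m / 2) with hb | hb
  · exact choose_le_choose_of_le_of_le_half hab hb
  · rw [← choose_symm (by omega : b ≤ m)]
    exact choose_le_choose_of_le_of_le_half (by omega) (by omega)

theorem choose_mul_choose_le_choose_mul_choose {n t k : ℕ} (j : ℕ) (htk : t ≤ k)
    (htkn : t + k ≤ n) : n.choose t * t.choose j ≤ n.choose k * k.choose j := by
  rcases le_or_gt j t with hjt | htj
  · rw [choose_mul hjt, choose_mul (hjt.trans htk)]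
    exact Nat.mul_le_mul_left _ (choose_le_choose_of_le_of_add_le (by omega) (by omega))
  · simp [choose_eq_zero_of_lt htj]

theorem sum_range_choose_mul_choose (n t : ℕ) :
    ∑ j ∈ Finset.range (t + 1), n.choose t * t.choose j = 2 ^ t * n.choose t := by
  rw [← Finset.mul_sum, sum_range_choose, Nat.mul_comm]

end Nat

theorem stmt_16_general (n t k : ℕ) (htk : t ≤ k) (htkn : t + k ≤ n) :
    (∑ j ∈ Finset.range (t + 1),
        min (n.choose t * t.choose j) (n.choose k * k.choose j))
      = ∑ j ∈ Finset.range (t + 1), n.choose t * t.choose j ∧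
    (∑ j ∈ Finset.range (t + 1),
        min (n.choose t * t.choose j) (n.choose k * k.choose j))
      = 2 ^ t * n.choose t := by
  have hmin : (∑ j ∈ Finset.range (t + 1),
      min (n.choose t * t.choose j) (n.choose k * k.choose j))
        = ∑ j ∈ Finset.range (t + 1), n.choose t * t.choose j :=
    Finset.sum_congr rfl fun j _ ↦
      min_eq_left (Nat.choose_mul_choose_le_choose_mul_choose j htk htkn)
  exact ⟨hmin, hmin.trans (Nat.sum_range_choose_mul_choose n t)⟩

theorem stmt_16 (n t k : ℕ) (htk : t ≤ k) (hkn : k ≤ n) (htkn : t + k ≤ n) :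
    (∑ j ∈ Finset.range (t + 1),
        min (n.choose t * t.choose j) (n.choose k * k.choose j))
      = ∑ j ∈ Finset.range (t + 1), n.choose t * t.choose j ∧
    (∑ j ∈ Finset.range (t + 1),
        min (n.choose t * t.choose j) (n.choose k * k.choose j))
      = 2 ^ t * n.choose t :=
  stmt_16_general n t k htk htkn
end

section
/- For 0 ≤ j ≤ t ≤ k ≤ n with t + k ≤ n, the inequality C(n,t)·C(t,j) ≤ C(n,k)·C(k,j) holds for binomial coefficients. -/
/-! Both sides share the factor `C(n, j)`: `C(n, t) C(t, j) = C(n, j) C(n - j, t - j)`, and likewise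
for `k`. It remains to compare `C(n - j, t - j)` with `C(n - j, k - j)`, which follows from the
unimodality of binomial coefficients since `t - j ≤ k - j` and `(t - j) + (k - j) ≤ n - j`. -/

namespace Nat

theorem choose_le_choose_of_le_of_le_half_s17 {n a b : ℕ} (hab : a ≤ b) (hb : b ≤ n / 2) :
    n.choose a ≤ n.choose b := by
  induction b, hab using Nat.le_induction with
  | base => rfl
  | succ c _ ih => exact (ih (by omega)).trans (choose_le_succ_of_lt_half_left (by omega))

theorem choose_le_choose_of_le_of_add_le_s17 {n a b : ℕ} (hab : a ≤ b) (h : a + b ≤ n) :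
    n.choose a ≤ n.choose b := by
  rcases le_or_gt b (n / 2) with hb | hb
  · exact choose_le_choose_of_le_of_le_half_s17 hab hb
  · rw [← choose_symm (by omega : b ≤ n)]
    exact choose_le_choose_of_le_of_le_half_s17 (by omega) (by omega)

end Nat

theorem stmt_17_general (n t k j : ℕ) (hjt : j ≤ t) (htk : t ≤ k)
    (htkn : t + k ≤ n) :
    n.choose t * t.choose j ≤ n.choose k * k.choose j := by
  rw [Nat.choose_mul hjt, Nat.choose_mul (hjt.trans htk)]
  exact Nat.mul_le_mul_left _ (Nat.choose_le_choose_of_le_of_add_le_s17 (by omega) (by omega))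

theorem stmt_17 (n t k j : ℕ) (hjt : j ≤ t) (htk : t ≤ k) (hkn : k ≤ n)
    (htkn : t + k ≤ n) :
    n.choose t * t.choose j ≤ n.choose k * k.choose j :=
  stmt_17_general n t k j hjt htk htkn
end
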